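/- Every closed submodule of a nonsingular square-free module M is fully invariant in M, i.e., f(K) ⊆ K for every endomorphism f of M and every closed submodule K of M. -/

import Mathlib

/-!
Let `L = K ⊓ f⁻¹(K)`. Square-freeness makes `L` essential in `K`: a submodule `U ≤ K` missing `L`
is mapped by `f` isomorphically onto a submodule meeting `U` trivially. Hence for every `k ∈ K` the
ideal `{r | r • k ∈ L}` is essential in `R`. If `u = k + f k'` lies in a submodule meeting `K`
trivially, this ideal for `k'` annihilates `u`, so `u = 0` by nonsingularity. Thus `K` is essential
in `K + f(K)`, and closedness gives `f(K) ≤ K`.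
-/

universe u v w

section Defs

variable {R : Type u} [Ring R]

/-- `N` is an essential submodule of `M`. -/
def EssentialSub {M : Type v} [AddCommGroup M] [Module R M] (N : Submodule R M) : Prop :=
  ∀ K : Submodule R M, K ⊓ N = ⊥ → K = ⊥

/-- `N` is essential in `P` (both submodules of `M`, `N ≤ P`). -/
def EssentialIn {M : Type v} [AddCommGroup M] [Module R M] (N P : Submodule R M) : Prop :=
  N ≤ P ∧ ∀ K : Submodule R M, K ≤ P → K ⊓ N = ⊥ → K = ⊥

/-- `N` is a closed submodule of `M`: it has no proper essential extension in `M`. -/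
def ClosedSub {M : Type v} [AddCommGroup M] [Module R M] (N : Submodule R M) : Prop :=
  ∀ P : Submodule R M, EssentialIn N P → N = P

/-- `i : M →ₗ[R] E` realizes `E` as an injective hull of `M`. -/
structure IsInjectiveHull {M : Type v} {E : Type w} [AddCommGroup M] [Module R M]
    [AddCommGroup E] [Module R E] (i : M →ₗ[R] E) : Prop where
  inj : Function.Injective i
  injE : Module.Injective R E
  ess : EssentialSub (LinearMap.range i)

/-- `M` is invariant under every automorphism of the hull `E` given by `i`. -/
def HullAutInv {M : Type v} {E : Type w} [AddCommGroup M] [Module R M]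
    [AddCommGroup E] [Module R E] (i : M →ₗ[R] E) : Prop :=
  ∀ g : E ≃ₗ[R] E, ∀ m : M, g (i m) ∈ LinearMap.range i

end Defs

/-- `M` is automorphism-invariant: invariant under all automorphisms of its injective hull. -/
def AutInvariant (R : Type u) [Ring R] (M : Type v) [AddCommGroup M] [Module R M] : Prop :=
  ∀ (E : Type v) [AddCommGroup E] [Module R E] (i : M →ₗ[R] E),
    IsInjectiveHull i → HullAutInv i

/-- Every monomorphism from a submodule of `M` into `M` extends to an endomorphism of `M`. -/
def PseudoInjective (R : Type u) [Ring R] (M : Type v) [AddCommGroup M] [Module R M] : Prop :=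
  ∀ (A : Submodule R M) (f : A →ₗ[R] M), Function.Injective f →
    ∃ g : M →ₗ[R] M, ∀ a : A, g a = f a

/-- Every homomorphism from a submodule of `M` into `M` extends to an endomorphism of `M`. -/
def QuasiInjective (R : Type u) [Ring R] (M : Type v) [AddCommGroup M] [Module R M] : Prop :=
  ∀ (A : Submodule R M) (f : A →ₗ[R] M), ∃ g : M →ₗ[R] M, ∀ a : A, g a = f a

/-- `X` is `Y`-injective. -/
def RelInjective (R : Type u) [Ring R] (X : Type v) (Y : Type w) [AddCommGroup X] [Module R X]
    [AddCommGroup Y] [Module R Y] : Prop :=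
  ∀ (A : Submodule R Y) (f : A →ₗ[R] X), ∃ g : Y →ₗ[R] X, ∀ a : A, g a = f a

/-- `M` contains no direct sum of two nonzero isomorphic submodules. -/
def SquareFreeMod (R : Type u) [Ring R] (M : Type v) [AddCommGroup M] [Module R M] : Prop :=
  ∀ (A B : Submodule R M), A ⊓ B = ⊥ → Nonempty (A ≃ₗ[R] B) → A = ⊥

/-- `X` and `Y` have no nonzero isomorphic submodules. -/
def OrthogonalMod (R : Type u) [Ring R] (X : Type v) (Y : Type w) [AddCommGroup X] [Module R X]
    [AddCommGroup Y] [Module R Y] : Prop :=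
  ∀ (A : Submodule R X) (B : Submodule R Y), Nonempty (A ≃ₗ[R] B) → A = ⊥

/-- No nonzero element of `M` is annihilated by an essential (right) ideal of `R`. -/
def NonsingularMod (R : Type u) [Ring R] (M : Type v) [AddCommGroup M] [Module R M] : Prop :=
  ∀ m : M, EssentialSub (LinearMap.ker (LinearMap.toSpanSingleton R M m)) → m = 0

section

variable {R : Type u} [Ring R] {M : Type v} [AddCommGroup M] [Module R M]

theorem EssentialSub.mono {N N' : Submodule R M} (hN : EssentialSub N) (hle : N ≤ N') :
    EssentialSub N' :=
  fun U hU => hN U (eq_bot_iff.2 (hU ▸ inf_le_inf_left U hle))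

theorem EssentialIn.essentialSub_comap_toSpanSingleton {L K : Submodule R M}
    (hLK : EssentialIn L K) {k : M} (hk : k ∈ K) :
    EssentialSub (L.comap (LinearMap.toSpanSingleton R M k)) := by
  set t := LinearMap.toSpanSingleton R M k
  intro J hJ
  have hJt : J.map t ⊓ L = ⊥ := by
    rw [eq_bot_iff]
    rintro _ ⟨⟨r, hrJ, rfl⟩, hrL⟩
    have hr : r ∈ J ⊓ L.comap t := ⟨hrJ, hrL⟩
    rw [hJ, Submodule.mem_bot] at hr
    simp [hr]
  have hJt_le : J.map t ≤ K := by
    rintro _ ⟨r, -, rfl⟩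
    exact K.smul_mem r hk
  have hJ_le : J ≤ L.comap t := fun r hrJ => by
    have hr : t r ∈ J.map t := Submodule.mem_map_of_mem hrJ
    rw [hLK.2 _ hJt_le hJt, Submodule.mem_bot] at hr
    simp [hr]
  rwa [inf_eq_left.2 hJ_le] at hJ

theorem SquareFreeMod.eq_bot_of_inf_comap_eq_bot (hsf : SquareFreeMod R M) (f : M →ₗ[R] M)
    {U : Submodule R M} (hU : U ⊓ U.comap f = ⊥) : U = ⊥ := by
  have hinj : Function.Injective (f.domRestrict U) := by
    rintro ⟨x, hx⟩ ⟨y, hy⟩ hxy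
    have hxy' : f (x - y) = 0 := by simpa [sub_eq_zero] using hxy
    have hmem : x - y ∈ U ⊓ U.comap f :=
      ⟨U.sub_mem hx hy, by simp [hxy']⟩
    rw [hU, Submodule.mem_bot, sub_eq_zero] at hmem
    exact Subtype.ext hmem
  have hdisj : U ⊓ U.map f = ⊥ := by
    rw [eq_bot_iff]
    rintro _ ⟨hfyU, y, hyU, rfl⟩
    have hy : y ∈ U ⊓ U.comap f := ⟨hyU, hfyU⟩
    rw [hU, Submodule.mem_bot] at hy
    simp [hy]
  exact hsf U (U.map f) hdisj
    ⟨(LinearEquiv.ofInjective _ hinj).trans (LinearEquiv.ofEq _ _ (f.range_domRestrict U))⟩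

theorem SquareFreeMod.essentialIn_inf_comap (hsf : SquareFreeMod R M) (f : M →ₗ[R] M)
    (K : Submodule R M) : EssentialIn (K ⊓ K.comap f) K := by
  refine ⟨inf_le_left, fun U hUK hU => hsf.eq_bot_of_inf_comap_eq_bot f (eq_bot_iff.2 ?_)⟩
  rw [← hU]
  exact le_inf inf_le_left
    (le_inf (inf_le_left.trans hUK) (inf_le_right.trans (Submodule.comap_mono hUK)))

theorem NonsingularMod.essentialIn_sup_map (hns : NonsingularMod R M) (f : M →ₗ[R] M)
    {L K : Submodule R M} (hLK : EssentialIn L K) (hLf : L ≤ K.comap f) :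
    EssentialIn K (K ⊔ K.map f) := by
  refine ⟨le_sup_left, fun U hU hUK => (Submodule.eq_bot_iff U).2 fun u hu => hns u ?_⟩
  obtain ⟨k, hk, _, ⟨k', hk', rfl⟩, rfl⟩ := Submodule.mem_sup.1 (hU hu)
  refine (hLK.essentialSub_comap_toSpanSingleton hk').mono fun r hr => ?_
  have hrK : r • (k + f k') ∈ K := by
    rw [smul_add, ← map_smul]
    exact K.add_mem (K.smul_mem r hk) (hLf hr)
  have hr0 : r • (k + f k') ∈ U ⊓ K := ⟨U.smul_mem r hu, hrK⟩
  rwa [hUK, Submodule.mem_bot] at hr0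

end

/-- every closed submodule of a nonsingular square-free module is fully
invariant. -/
theorem closed_fully_invariant {R : Type u} [Ring R]
    {M : Type v} [AddCommGroup M] [Module R M]
    (hns : NonsingularMod R M) (hsf : SquareFreeMod R M)
    (K : Submodule R M) (hK : ClosedSub K) (f : M →ₗ[R] M) :
    ∀ x ∈ K, f x ∈ K := by
  have hess : EssentialIn K (K ⊔ K.map f) :=
    hns.essentialIn_sup_map f (hsf.essentialIn_inf_comap f K) inf_le_right
  have hmap : K.map f ≤ K := le_sup_right.trans (hK _ hess).ge
  exact fun x hx => hmap (Submodule.mem_map_of_mem hx)
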